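/- arXiv:2307.05579 — 6 statements merged into one kernel-verified Lean document; each statement's English description precedes it below -/
import Mathlib

section
/- If N is an abelian normal subgroup of a finite group G and C is the centralizer of N in G, then the number of conjugacy classes of G satisfies k(G) ≥ k(G/C) + (|N| - 1)/|G : C|. -/
/-!
Every element of `N` commutes with `C`, so its conjugacy class has at most `|G : C|` elements;
hence `N \ {1}` meets at least `(|N| - 1) / |G : C|` classes of `G`. Since `N ≤ C`, these classes,
together with the class of `1`, all lie over the trivial class of `G ⧸ C` under the surjection
`ConjClasses G → ConjClasses (G ⧸ C)`, which therefore has at least that many more classes in its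
domain than in its codomain.
-/

open Subgroup

theorem Function.Surjective.card_add_ncard_preimage_singleton_le {α β : Type*} [Finite α]
    {f : α → β} (hf : f.Surjective) (b : β) :
    Nat.card β + (f ⁻¹' {b}).ncard ≤ Nat.card α + 1 := by
  have : Finite β := .of_surjective f hf
  have hcompl : ({b}ᶜ : Set β).ncard ≤ (f ⁻¹' {b})ᶜ.ncard := by
    rw [← Set.image_preimage_eq {b}ᶜ hf, Set.preimage_compl]
    exact Set.ncard_image_le
  have hβ := Set.ncard_add_ncard_compl {b}
  have hα := Set.ncard_add_ncard_compl (f ⁻¹' {b})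
  rw [Set.ncard_singleton] at hβ
  omega

namespace ConjClasses

variable {G : Type*} [Group G]

theorem mk_eq_one_iff {g : G} : ConjClasses.mk g = 1 ↔ g = 1 := by
  rw [one_eq_mk_one, mk_eq_mk_iff_isConj, isConj_one_left]

theorem ncard_carrier_mk (g : G) : (ConjClasses.mk g).carrier.ncard = (centralizer {g}).index := by
  rw [← ConjAct.orbit_eq_carrier_conjClasses, ← MulAction.index_stabilizer,
    centralizer_eq_comap_stabilizer]
  exact (index_comap_of_surjective _ ConjAct.toConjAct.surjective).symm

theorem ncard_le_ncard_image_mk_mul_index [Finite G] {s : Set G} {H : Subgroup G}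
    (hH : H ≤ centralizer s) : s.ncard ≤ (ConjClasses.mk '' s).ncard * H.index := by
  classical
  have := Fintype.ofFinite G
  simp_rw [Set.ncard_eq_toFinset_card', Set.toFinset_image]
  rw [mul_comm]
  refine Finset.card_le_mul_card_image _ _ fun x hx => ?_
  obtain ⟨g, hg, rfl⟩ := Finset.mem_image.1 hx
  calc _ ≤ (ConjClasses.mk g).carrier.toFinset.card := by
        refine Finset.card_le_card fun a ha => ?_
        simp_all [mem_carrier_iff_mk_eq]
    _ = (centralizer {g}).index := by rw [← Set.ncard_eq_toFinset_card', ncard_carrier_mk]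
    _ ≤ H.index := index_antitone (hH.trans (centralizer_le (by simpa using hg)))

variable {K : Type*} [Group K]

theorem image_mk_ker_subset_preimage_map_one (φ : G →* K) :
    ConjClasses.mk '' (φ.ker : Set G) ⊆ ConjClasses.map φ ⁻¹' {1} := by
  rintro _ ⟨g, hg, rfl⟩
  exact mk_eq_one_iff.2 hg

end ConjClasses

open ConjClasses in
theorem card_conjClasses_quotient_add_ncard_image_mk_le {G : Type*} [Group G] [Finite G]
    {N K : Subgroup G} [K.Normal] (hNK : N ≤ K) :
    Nat.card (ConjClasses (G ⧸ K)) + (ConjClasses.mk '' ((N : Set G) \ {1})).ncard ≤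
      Nat.card (ConjClasses G) := by
  have hfiber : insert 1 (ConjClasses.mk '' ((N : Set G) \ {1})) ⊆
      ConjClasses.map (QuotientGroup.mk' K) ⁻¹' {1} := by
    refine Set.insert_subset rfl ((Set.image_mono fun g hg => ?_).trans
      (image_mk_ker_subset_preimage_map_one _))
    rw [SetLike.mem_coe, QuotientGroup.ker_mk']
    exact hNK hg.1
  have hone : 1 ∉ ConjClasses.mk '' ((N : Set G) \ {1}) := by
    rintro ⟨g, hg, hg1⟩
    exact hg.2 (mk_eq_one_iff.1 hg1)
  have := Set.ncard_insert_of_notMem hone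
  have := Set.ncard_le_ncard hfiber
  have := (map_surjective (QuotientGroup.mk'_surjective K)).card_add_ncard_preimage_singleton_le 1
  omega

theorem stmt_0_general (G : Type*) [Group G] [Finite G] (N : Subgroup G)
    (hab : ∀ a b : G, a ∈ N → b ∈ N → a * b = b * a)
    [hC : (Subgroup.centralizer (N : Set G)).Normal] :
    (Nat.card (ConjClasses G) : ℝ) ≥
      Nat.card (ConjClasses (G ⧸ Subgroup.centralizer (N : Set G))) +
        ((Nat.card N : ℝ) - 1) / (Subgroup.centralizer (N : Set G)).index := by
  set C := centralizer (N : Set G)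
  have hNC : N ≤ C := fun a ha => mem_centralizer_iff.2 fun b hb => hab b a hb ha
  have hclasses := card_conjClasses_quotient_add_ncard_image_mk_le hNC
  have hcount := ConjClasses.ncard_le_ncard_image_mk_mul_index
    (s := (N : Set G) \ {1}) (centralizer_le Set.sdiff_subset)
  rw [Set.ncard_sdiff_singleton_of_mem N.one_mem, ← Nat.card_coe_set_eq] at hcount
  have hidx : (0 : ℝ) < C.index := by exact_mod_cast Nat.pos_of_ne_zero index_ne_zero_of_finite
  have hquot :
      ((Nat.card N : ℝ) - 1) / C.index ≤ (ConjClasses.mk '' ((N : Set G) \ {1})).ncard := by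
    rw [div_le_iff₀ hidx, sub_le_iff_le_add]
    exact_mod_cast Nat.sub_le_iff_le_add.1 hcount
  have hclassesR : (Nat.card (ConjClasses (G ⧸ C)) : ℝ) +
      (ConjClasses.mk '' ((N : Set G) \ {1})).ncard ≤ Nat.card (ConjClasses G) := by
    exact_mod_cast hclasses
  linarith

/-- If `N` is an abelian normal subgroup of a finite group `G` and `C` is the
centralizer of `N` in `G`, then `k(G) ≥ k(G/C) + (|N| - 1)/|G : C|`. -/
theorem stmt_0 (G : Type*) [Group G] [Finite G] (N : Subgroup G) (hN : N.Normal)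
    (hab : ∀ a b : G, a ∈ N → b ∈ N → a * b = b * a)
    [hC : (Subgroup.centralizer (N : Set G)).Normal] :
    (Nat.card (ConjClasses G) : ℝ) ≥
      Nat.card (ConjClasses (G ⧸ Subgroup.centralizer (N : Set G))) +
        ((Nat.card N : ℝ) - 1) / (Subgroup.centralizer (N : Set G)).index :=
  stmt_0_general G N hab (hC := hC)
end

section
/- If N is a normal subgroup of a finite group G, then k(G) ≤ k(G/N) · k(N), where k denotes the number of conjugacy classes. -/
section Aux

variable {G : Type*} [Group G] (N : Subgroup G) [N.Normal]

/-- Pick an element commuting with `x` in the coset `b`, if one exists. -/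
noncomputable def pickC (x : G) (b : G ⧸ N) : G :=
  Classical.epsilon (fun y => Commute x y ∧ (y : G ⧸ N) = b)

lemma pickC_spec {x : G} {b : G ⧸ N} (h : ∃ y, Commute x y ∧ (y : G ⧸ N) = b) :
    Commute x (pickC N x b) ∧ ((pickC N x b : G) : G ⧸ N) = b :=
  Classical.epsilon_spec h

/-- `y` relative to the chosen representative of its fiber data. -/
noncomputable def mEl (x y : G) : G := (pickC N x (y : G ⧸ N))⁻¹ * y

noncomputable def nEl (x y : G) : G := (pickC N (mEl N x y) (x : G ⧸ N))⁻¹ * x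

variable {N}

lemma mEl_spec {x y : G} (hxy : Commute x y) :
    Commute x (mEl N x y) ∧ mEl N x y ∈ N := by
  obtain ⟨h1, h2⟩ := pickC_spec N (x := x) (b := (y : G ⧸ N)) ⟨y, hxy, rfl⟩
  constructor
  · exact h1.inv_right.mul_right hxy
  · rw [← QuotientGroup.eq_one_iff, mEl, QuotientGroup.mk_mul, QuotientGroup.mk_inv, h2,
      inv_mul_cancel]

lemma nEl_spec {x y : G} (hxy : Commute x y) :
    Commute (nEl N x y) (mEl N x y) ∧ nEl N x y ∈ N := by
  obtain ⟨h1, h2⟩ := pickC_spec N (x := mEl N x y) (b := (x : G ⧸ N))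
    ⟨x, (mEl_spec hxy).1.symm, rfl⟩
  constructor
  · exact (h1.symm.inv_left).mul_left (mEl_spec hxy).1
  · rw [← QuotientGroup.eq_one_iff, nEl, QuotientGroup.mk_mul, QuotientGroup.mk_inv, h2,
      inv_mul_cancel]

omit [N.Normal] in
lemma mEl_recover (x y : G) : y = pickC N x (y : G ⧸ N) * mEl N x y := by
  rw [mEl, mul_inv_cancel_left]

omit [N.Normal] in
lemma nEl_recover (x y : G) : x = pickC N (mEl N x y) (x : G ⧸ N) * nEl N x y := by
  rw [nEl, mul_inv_cancel_left]

lemma card_comm_le (G : Type*) [Group G] [Finite G] (N : Subgroup G) [N.Normal] :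
    Nat.card { p : G × G // Commute p.1 p.2 } ≤
      Nat.card { p : (G ⧸ N) × (G ⧸ N) // Commute p.1 p.2 } *
        Nat.card { p : N × N // Commute p.1 p.2 } := by
  rw [← Nat.card_prod]
  refine Nat.card_le_card_of_injective (fun p =>
    (⟨((p.1.1 : G ⧸ N), (p.1.2 : G ⧸ N)), Commute.map p.2 (QuotientGroup.mk' N)⟩,
     ⟨(⟨nEl N p.1.1 p.1.2, (nEl_spec p.2).2⟩, ⟨mEl N p.1.1 p.1.2, (mEl_spec p.2).2⟩),
      Subtype.ext (nEl_spec p.2).1⟩)) ?_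
  rintro ⟨⟨x₁, y₁⟩, h₁⟩ ⟨⟨x₂, y₂⟩, h₂⟩ h
  simp only [Prod.ext_iff, Subtype.ext_iff, Subtype.mk.injEq, Prod.mk.injEq] at h
  obtain ⟨⟨hx, hy⟩, hn, hm⟩ := h
  have hx12 : x₁ = x₂ := by
    rw [nEl_recover (N := N) x₁ y₁, nEl_recover (N := N) x₂ y₂, hn, hm, hx]
  have hy12 : y₁ = y₂ := by
    rw [mEl_recover (N := N) x₁ y₁, mEl_recover (N := N) x₂ y₂, hm, hx12, hy]
  simp [hx12, hy12]

end Aux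

/-- If `N` is a normal subgroup of a finite group `G`, then `k(G) ≤ k(G/N) · k(N)`. -/
theorem stmt_1 (G : Type*) [Group G] [Finite G] (N : Subgroup G) [hN : N.Normal] :
    Nat.card (ConjClasses G) ≤
      Nat.card (ConjClasses (G ⧸ N)) * Nat.card (ConjClasses N) := by
  have key := card_comm_le G N
  rw [card_comm_eq_card_conjClasses_mul_card, card_comm_eq_card_conjClasses_mul_card,
    card_comm_eq_card_conjClasses_mul_card] at key
  have hcard : Nat.card G = Nat.card (G ⧸ N) * Nat.card N :=
    Subgroup.card_eq_card_quotient_mul_card_subgroup N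
  have hpos : 0 < Nat.card G := Nat.card_pos
  refine Nat.le_of_mul_le_mul_right ?_ hpos
  calc Nat.card (ConjClasses G) * Nat.card G
      ≤ Nat.card (ConjClasses (G ⧸ N)) * Nat.card (G ⧸ N) *
        (Nat.card (ConjClasses N) * Nat.card N) := key
    _ = Nat.card (ConjClasses (G ⧸ N)) * Nat.card (ConjClasses N) * Nat.card G := by
        rw [hcard]; ring
end

section
/- If H is a subgroup of a finite group G, then k(H) ≤ |G : H| · k(G), where k denotes the number of conjugacy classes. -/
/-!
The commuting probability of a finite group `M` is `k(M) / |M|`, since the commuting pairs of `M`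
number `k(M) · |M|`. The commuting pairs of `H` are among those of `G`, which gives
`k(H) / |H| ≤ (k(G) / |G|) · |G : H|²`; substituting `|G| = |H| · |G : H|` leaves
`k(H) ≤ |G : H| · k(G)`.
-/

/-- If `H` is a subgroup of a finite group `G`, then `k(H) ≤ |G : H| · k(G)`. -/
theorem stmt_3 (G : Type*) [Group G] [Finite G] (H : Subgroup G) :
    Nat.card (ConjClasses H) ≤ H.index * Nat.card (ConjClasses G) := by
  have hprob := H.commProb_subgroup_le
  rw [commProb_def', commProb_def', ← H.card_mul_index, Nat.cast_mul] at hprob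
  have hH : (0 : ℚ) < Nat.card H := Nat.cast_pos.mpr Finite.card_pos
  have hi : (0 : ℚ) < H.index := Nat.cast_pos.mpr (Nat.pos_of_ne_zero H.index_ne_zero_of_finite)
  have key : (Nat.card (ConjClasses H) : ℚ) ≤ H.index * Nat.card (ConjClasses G) :=
    calc (Nat.card (ConjClasses H) : ℚ)
        = Nat.card (ConjClasses H) / Nat.card H * Nat.card H := by field_simp
      _ ≤ Nat.card (ConjClasses G) / (Nat.card H * H.index) * H.index ^ 2 * Nat.card H := by
          gcongr
      _ = H.index * Nat.card (ConjClasses G) := by field_simp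
  exact_mod_cast key
end

section
/- Let G be a finite group with a unique minimal normal subgroup N = S × ⋯ × S (n copies), where S is a nonabelian simple group, and suppose a prime p divides the order of G/M, where M = G ∩ Aut(S)^n under the embedding G ≤ Aut(S) ≀ Sₙ. Then n ≥ p and G has at least p conjugacy classes, witnessed by the elements (x,1,…,1), (x,x,1,…,1), …, (x,…,x) for any fixed 1 ≠ x ∈ S. -/
/-- Let `G` be finite with a unique minimal normal subgroup `N ≅ S × ⋯ × S`
(`n` copies, `S` nonabelian simple), let `φ : G → Sym(n)` be the permutation
action of `G` on the `n` factors (so that conjugation permutes coordinates)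
with kernel `M`. If a prime `p` divides `|G/M|`, then `n ≥ p` and
`k(G) ≥ p`, witnessed by `(x,1,…,1), (x,x,1,…,1), …, (x,…,x)` for `1 ≠ x ∈ S`. -/
theorem stmt_12 (G S : Type*) [Group G] [Finite G] [Group S] [Finite S]
    [IsSimpleGroup S] (hnonab : ∃ a b : S, a * b ≠ b * a)
    (n p : ℕ) (hp : p.Prime)
    (N : Subgroup G) (hN : N.Normal)
    (hmin : ∀ K : Subgroup G, K.Normal → K ≠ ⊥ → N ≤ K) (hNbot : N ≠ ⊥)
    (e : N ≃* (Fin n → S))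
    (φ : G →* Equiv.Perm (Fin n))
    (hcompat : ∀ (g : G) (x : N) (i : Fin n),
      e ⟨g * ↑x * g⁻¹, hN.conj_mem ↑x x.2 g⟩ i = 1 ↔ e x ((φ g)⁻¹ i) = 1)
    (hdvd : p ∣ Nat.card (G ⧸ φ.ker)) :
    p ≤ n ∧ p ≤ Nat.card (ConjClasses G) := by
  classical
  -- p ≤ n
  have hcard : Nat.card (G ⧸ φ.ker) = Nat.card φ.range :=
    Nat.card_congr (QuotientGroup.quotientKerEquivRange φ).toEquiv
  have hdvd2 : p ∣ Nat.card (Equiv.Perm (Fin n)) := by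
    exact (hcard ▸ hdvd).trans (Subgroup.card_subgroup_dvd_card _)
  have hpn : p ≤ n := by
    rw [Nat.card_eq_fintype_card, Fintype.card_perm, Fintype.card_fin] at hdvd2
    exact (Nat.Prime.dvd_factorial hp).mp hdvd2
  refine ⟨hpn, ?_⟩
  -- pick x ≠ 1
  obtain ⟨a, b, hab⟩ := hnonab
  have hx : a ≠ 1 := by rintro rfl; simp at hab
  -- elements
  set v : Fin p → Fin n → S := fun k i => if (i : ℕ) ≤ (k : ℕ) then a else 1 with hv
  have hsupp : ∀ k : Fin p, (Finset.univ.filter (fun i : Fin n => v k i ≠ 1)).card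
      = (k : ℕ) + 1 := by
    intro k
    have hk : (k : ℕ) < n := lt_of_lt_of_le k.2 hpn
    have : (Finset.univ.filter (fun i : Fin n => v k i ≠ 1)) = Finset.Iic ⟨k, hk⟩ := by
      ext i
      simp [hv, Fin.le_def, hx]
    rw [this, Fin.card_Iic]
  have key : Function.Injective (fun k : Fin p => ConjClasses.mk ((e.symm (v k) : N) : G)) := by
    intro j k hjk
    have hconj : IsConj ((e.symm (v j) : N) : G) ((e.symm (v k) : N) : G) :=
      ConjClasses.mk_eq_mk_iff_isConj.mp hjk
    rw [isConj_iff] at hconj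
    obtain ⟨h, hh⟩ := hconj
    -- the conjugated element as element of N
    have hmem := hN.conj_mem ((e.symm (v j) : N) : G) (e.symm (v j)).2 h
    have heq : (⟨h * ((e.symm (v j) : N) : G) * h⁻¹, hmem⟩ : N) = e.symm (v k) := by
      exact Subtype.ext hh
    have hiff : ∀ i : Fin n, v k i = 1 ↔ v j ((φ h)⁻¹ i) = 1 := by
      intro i
      have := hcompat h (e.symm (v j)) i
      rw [heq] at this
      simpa using this
    -- cardinalities
    have hbij : (Finset.univ.filter (fun i : Fin n => v k i ≠ 1)).card
        = (Finset.univ.filter (fun i : Fin n => v j i ≠ 1)).card := by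
      apply Finset.card_bij (fun i _ => (φ h)⁻¹ i)
      · intro i hi
        simp only [Finset.mem_filter, Finset.mem_univ, true_and] at hi ⊢
        exact fun hc => hi ((hiff i).mpr hc)
      · intro i₁ _ i₂ _ hii
        exact (φ h)⁻¹.injective hii
      · intro i hi
        simp only [Finset.mem_filter, Finset.mem_univ, true_and] at hi
        refine ⟨(φ h) i, ?_, by simp⟩
        simp only [Finset.mem_filter, Finset.mem_univ, true_and]
        intro hc
        exact hi ((hiff ((φ h) i)).mp (by simpa using hc) |> fun t => by simpa using t)
      
    rw [hsupp j, hsupp k] at hbij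
    exact Fin.ext (by omega)
  have : Nat.card (Fin p) ≤ Nat.card (ConjClasses G) :=
    Nat.card_le_card_of_injective _ key
  simpa using this
end

section
/- Let G be a finite group with a normal Sylow p-subgroup P of order p (p prime), let C = C_G(P) and n = |G : C|. Then G/C is cyclic, n divides p − 1, and k(G) ≥ n + (p−1)·k(U)/n, where U is a Hall p'-subgroup of C (so C = P × U). -/
/-!
Conjugation gives an embedding of `G ⧸ C` into `Aut P ≃* (ZMod p)ˣ`, a cyclic group of order
`p - 1`. For the class count, since `G ⧸ C` is abelian each of the `n - 1` nontrivial cosets of `C`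
is a union of conjugacy classes of `G`, while each nontrivial `G`-class inside `C` is a union of at
most `n` classes of `C`; hence `k(G) ≥ n + (k(C) - 1) / n`. Finally `C ≃* P × U` with `P` abelian
of order `p`, so `k(C) - 1 = p k(U) - 1 ≥ (p - 1) k(U)`.
-/

open Subgroup

section ConjClasses

variable {G H : Type*} [Group G] [Group H]

theorem card_conjClasses_of_isMulCommutative [IsMulCommutative G] :
    Nat.card (ConjClasses G) = Nat.card G := by
  refine (Nat.card_congr (Equiv.ofBijective _ ⟨fun a b hab => ?_, ConjClasses.mk_surjective⟩)).symm
  obtain ⟨c, rfl⟩ := isConj_iff.mp (ConjClasses.mk_eq_mk_iff_isConj.mp hab)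
  rw [mul_comm' c a, mul_inv_cancel_right]

theorem card_conjClasses_prod [Finite G] [Finite H] :
    Nat.card (ConjClasses (G × H)) = Nat.card (ConjClasses G) * Nat.card (ConjClasses H) := by
  have h := commProb_prod G H
  rw [commProb_def', commProb_def', commProb_def', Nat.card_prod, div_mul_div_comm,
    ← Nat.cast_mul, ← Nat.cast_mul] at h
  exact_mod_cast (div_left_inj' (Nat.cast_ne_zero.mpr (Nat.mul_pos Nat.card_pos Nat.card_pos).ne')).mp h

theorem MulEquiv.card_conjClasses_eq (e : G ≃* H) :
    Nat.card (ConjClasses G) = Nat.card (ConjClasses H) := by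
  refine Nat.card_congr ⟨ConjClasses.map e, ConjClasses.map e.symm, fun x => ?_, fun y => ?_⟩
  · obtain ⟨a, rfl⟩ := ConjClasses.mk_surjective x
    exact congrArg ConjClasses.mk (e.symm_apply_apply a)
  · obtain ⟨b, rfl⟩ := ConjClasses.mk_surjective y
    exact congrArg ConjClasses.mk (e.apply_symm_apply b)

theorem ConjClasses.ncard_fiber_map_subtype_le (N : Subgroup G) [N.Normal] [N.FiniteIndex]
    (d : ConjClasses G) :
    {t : ConjClasses N | ConjClasses.map N.subtype t = d}.ncard ≤ N.index := by
  rcases Set.eq_empty_or_nonempty {t : ConjClasses N | ConjClasses.map N.subtype t = d}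
    with h | ⟨t₀, rfl⟩
  · simp [h]
  obtain ⟨c, rfl⟩ := ConjClasses.mk_surjective t₀
  -- `G`-conjugates of `c` by elements of one coset of `N` are `N`-conjugate.
  have hsub : {t : ConjClasses N | ConjClasses.map N.subtype t =
        ConjClasses.map N.subtype (.mk c)} ⊆
      Set.range fun q : G ⧸ N => ConjClasses.mk
        (⟨q.out * c * q.out⁻¹, Normal.conj_mem inferInstance _ c.2 _⟩ : N) := by
    intro t ht
    obtain ⟨c', rfl⟩ := ConjClasses.mk_surjective t
    obtain ⟨g, hg⟩ := isConj_iff.mp (ConjClasses.mk_eq_mk_iff_isConj.mp ht.symm)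
    obtain ⟨h, hh⟩ := QuotientGroup.mk_out_eq_mul N g
    refine ⟨g, ConjClasses.mk_eq_mk_iff_isConj.mpr (isConj_iff.mpr
      ⟨⟨g * h⁻¹ * g⁻¹, Normal.conj_mem inferInstance _ (inv_mem h.2) _⟩, Subtype.ext ?_⟩)⟩
    rw [show (c' : G) = N.subtype c' from rfl, ← hg]
    simp only [coe_mul, hh, coe_inv, subtype_apply]
    group
  calc _ ≤ (Set.range _).ncard := Set.ncard_le_ncard hsub
    _ ≤ Nat.card (G ⧸ N) := (Nat.card_coe_set_eq _).symm.trans_le (Finite.card_range_le _)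
    _ = N.index := N.index_eq_card.symm

theorem ConjClasses.ncard_le_index_mul_ncard (N : Subgroup G) [N.Normal] [Finite G]
    {s : Set (ConjClasses N)} {t : Set (ConjClasses G)}
    (hst : Set.MapsTo (ConjClasses.map N.subtype) s t) : s.ncard ≤ N.index * t.ncard := by
  classical
  rw [Set.ncard_eq_toFinset_card s, Set.ncard_eq_toFinset_card t]
  refine Finset.card_le_mul_card_image_of_maps_to
    (fun a ha => by simpa using hst (by simpa using ha)) _ fun d _ => ?_
  calc _ ≤ {t : ConjClasses N | ConjClasses.map N.subtype t = d}.ncard := by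
        rw [Set.ncard_eq_toFinset_card _ (Set.toFinite _)]
        exact Finset.card_le_card fun a => by simp +contextual
    _ ≤ N.index := ConjClasses.ncard_fiber_map_subtype_le N d

end ConjClasses

theorem Function.Surjective.card_sub_one_add_ncard_preimage_le {α β : Type*} [Finite α]
    {f : α → β} (hf : f.Surjective) (b : β) :
    Nat.card β - 1 + (f ⁻¹' {b}).ncard ≤ Nat.card α := by
  have : Finite β := .of_surjective f hf
  have hcompl : ({b}ᶜ : Set β).ncard ≤ (f ⁻¹' {b})ᶜ.ncard := by
    simpa [← Set.preimage_compl, Set.image_preimage_eq _ hf] using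
      Set.ncard_image_le (f := f) (s := (f ⁻¹' {b})ᶜ)
  have := Set.ncard_add_ncard_compl (f ⁻¹' {b})
  rw [Set.ncard_compl, Set.ncard_singleton] at hcompl
  omega

theorem MulAut.conjNormal_ker {G : Type*} [Group G] (H : Subgroup G) [H.Normal] :
    (MulAut.conjNormal : G →* MulAut H).ker = centralizer (H : Set G) := by
  ext g
  simp only [MonoidHom.mem_ker, MulEquiv.ext_iff, Subtype.ext_iff, MulAut.conjNormal_apply,
    MulAut.one_apply, Subtype.forall, mem_centralizer_iff, SetLike.mem_coe]
  exact forall₂_congr fun a _ => by rw [mul_inv_eq_iff_eq_mul, eq_comm]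

namespace Subgroup

variable {G : Type*} [Group G]

theorem index_add_card_conjClasses_sub_one_div_le (N : Subgroup G) [N.Normal] [Finite G]
    [IsMulCommutative (G ⧸ N)] :
    (N.index : ℝ) + (Nat.card (ConjClasses N) - 1) / N.index ≤ Nat.card (ConjClasses G) := by
  set s := ConjClasses.map N.subtype '' {1}ᶜ
  have hN : Nat.card (ConjClasses N) - 1 ≤ N.index * s.ncard := by
    calc _ = ({1}ᶜ : Set (ConjClasses N)).ncard := by rw [Set.ncard_compl, Set.ncard_singleton]
      _ ≤ _ := ConjClasses.ncard_le_index_mul_ncard N (Set.mapsTo_image _ _)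
  have h1s : 1 ∉ s := by
    rintro ⟨t, ht, hmap⟩
    obtain ⟨c, rfl⟩ := ConjClasses.mk_surjective t
    rw [ConjClasses.one_eq_mk_one] at hmap
    have hc : (c : G) = 1 := isConj_one_left.mp (ConjClasses.mk_eq_mk_iff_isConj.mp hmap)
    obtain rfl : c = 1 := Subtype.ext hc
    exact ht ConjClasses.one_eq_mk_one.symm
  have hfib : insert 1 s ⊆ ConjClasses.map (QuotientGroup.mk' N) ⁻¹' {1} := by
    rintro _ (rfl | ⟨t, -, rfl⟩)
    · rfl
    · obtain ⟨c, rfl⟩ := ConjClasses.mk_surjective t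
      exact congrArg ConjClasses.mk ((QuotientGroup.eq_one_iff _).mpr c.2)
  have hG : N.index - 1 + (s.ncard + 1) ≤ Nat.card (ConjClasses G) := by
    have hquot := (ConjClasses.map_surjective (QuotientGroup.mk'_surjective N)
      ).card_sub_one_add_ncard_preimage_le 1
    rw [card_conjClasses_of_isMulCommutative, ← index_eq_card] at hquot
    have := Set.ncard_le_ncard hfib
    rw [Set.ncard_insert_of_notMem h1s] at this
    omega
  have hidx : 0 < N.index := Nat.pos_of_ne_zero index_ne_zero_of_finite
  have hk : 1 ≤ Nat.card (ConjClasses N) := Nat.card_pos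
  calc (N.index : ℝ) + (Nat.card (ConjClasses N) - 1) / N.index ≤ N.index + s.ncard := by
        gcongr
        rw [div_le_iff₀ (by exact_mod_cast hidx), ← Nat.cast_one, ← Nat.cast_sub hk, mul_comm]
        exact_mod_cast hN
    _ ≤ Nat.card (ConjClasses G) := by exact_mod_cast (by omega : N.index + s.ncard ≤ _)

noncomputable def prodMulEquivOfCommute {H K C : Subgroup G} [Finite C] (hHC : H ≤ C)
    (hKC : K ≤ C) (hcomm : ∀ h ∈ H, ∀ k ∈ K, Commute h k) (hdisj : Disjoint H K)
    (hcard : Nat.card C = Nat.card H * Nat.card K) : H × K ≃* C :=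
  MulEquiv.ofBijective ((inclusion hHC).noncommCoprod (inclusion hKC)
      fun h k => Subtype.ext (hcomm h h.2 k k.2)) <| by
    refine (Nat.bijective_iff_injective_and_card _).mpr ⟨?_, by rw [Nat.card_prod, hcard]⟩
    refine (MonoidHom.noncommCoprod_injective _ _ _).mpr
      ⟨inclusion_injective hHC, inclusion_injective hKC, ?_⟩
    rw [disjoint_def]
    rintro _ ⟨h, rfl⟩ ⟨k, hk⟩
    have hhk : (h : G) = k := congrArg Subtype.val hk.symm
    exact Subtype.ext (disjoint_def.mp hdisj h.2 (hhk ▸ k.2))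

theorem exists_injective_quotient_centralizer_to_units (H : Subgroup G) [H.Normal]
    [IsCyclic H] :
    ∃ f : G ⧸ centralizer (H : Set G) →* (ZMod (Nat.card H))ˣ, Function.Injective f :=
  ⟨((IsCyclic.mulAutMulEquiv H).toMonoidHom.comp (QuotientGroup.kerLift MulAut.conjNormal)).comp
      (QuotientGroup.quotientMulEquivOfEq (MulAut.conjNormal_ker H).symm).toMonoidHom,
    (IsCyclic.mulAutMulEquiv H).injective.comp (QuotientGroup.kerLift_injective _) |>.comp
      (QuotientGroup.quotientMulEquivOfEq (MulAut.conjNormal_ker H).symm).injective⟩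

theorem isCyclic_quotient_centralizer_of_card_prime (H : Subgroup G) [H.Normal]
    (hH : (Nat.card H).Prime) : IsCyclic (G ⧸ centralizer (H : Set G)) := by
  have : Fact (Nat.card H).Prime := ⟨hH⟩
  have : IsCyclic H := isCyclic_of_prime_card rfl
  obtain ⟨f, hf⟩ := exists_injective_quotient_centralizer_to_units H
  exact isCyclic_of_injective f hf

theorem card_quotient_centralizer_dvd_of_card_prime (H : Subgroup G) [H.Normal]
    (hH : (Nat.card H).Prime) : Nat.card (G ⧸ centralizer (H : Set G)) ∣ Nat.card H - 1 := by
  have : Fact (Nat.card H).Prime := ⟨hH⟩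
  have : IsCyclic H := isCyclic_of_prime_card rfl
  obtain ⟨f, hf⟩ := exists_injective_quotient_centralizer_to_units H
  simpa only [Nat.card_units, Nat.card_zmod] using card_dvd_of_injective f hf

end Subgroup

/-- If `G` is finite with a normal Sylow `p`-subgroup `P` of order `p`,
`C = C_G(P)` and `n = |G : C|`, then `G/C` is cyclic, `n ∣ p − 1`, and
`k(G) ≥ n + (p−1)·k(U)/n`, where `U` is a Hall `p'`-subgroup of `C`
(so that `C = P × U`). -/
theorem stmt_13 (G : Type*) [Group G] [Finite G] (p : ℕ) (hp : p.Prime)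
    (P : Sylow p G) (hPnormal : (P : Subgroup G).Normal)
    (hPcard : Nat.card (P : Subgroup G) = p)
    [hC : (Subgroup.centralizer (P : Set G)).Normal]
    (n : ℕ) (hn : n = (Subgroup.centralizer (P : Set G)).index)
    (U : Subgroup G) (hU : U ≤ Subgroup.centralizer (P : Set G))
    (hUcard : Nat.card (Subgroup.centralizer (P : Set G)) = p * Nat.card U)
    (hUp' : ¬ p ∣ Nat.card U) :
    IsCyclic (G ⧸ Subgroup.centralizer (P : Set G)) ∧ n ∣ p - 1 ∧
    (Nat.card (ConjClasses G) : ℝ) ≥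
      n + ((p : ℝ) - 1) * Nat.card (ConjClasses U) / n := by
  subst hn
  have : Fact p.Prime := ⟨hp⟩
  have hPprime : (Nat.card (P : Subgroup G)).Prime := by rwa [hPcard]
  have hcyc := isCyclic_quotient_centralizer_of_card_prime _ hPprime
  refine ⟨hcyc, ?_, ?_⟩
  · have hdvd := card_quotient_centralizer_dvd_of_card_prime _ hPprime
    rwa [hPcard, ← index_eq_card] at hdvd
  have : IsCyclic P := isCyclic_of_prime_card hPcard
  have hcomm : ∀ x ∈ (P : Subgroup G), ∀ u ∈ U, Commute x u :=
    fun x hx u hu => mem_centralizer_iff.mp (hU hu) x hx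
  have hdisj : Disjoint (P : Subgroup G) U := disjoint_of_coprime_natCard <| by
    rw [hPcard]; exact (Nat.Prime.coprime_iff_not_dvd hp).mpr hUp'
  have hcard : Nat.card (centralizer ((P : Subgroup G) : Set G)) = Nat.card P * Nat.card U := by
    rw [hPcard]; exact hUcard
  have hkC : Nat.card (ConjClasses (centralizer ((P : Subgroup G) : Set G))) =
      p * Nat.card (ConjClasses U) := by
    rw [← (prodMulEquivOfCommute (le_centralizer _) hU hcomm hdisj hcard).card_conjClasses_eq,
      card_conjClasses_prod, card_conjClasses_of_isMulCommutative, hPcard]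
  have hkU : (1 : ℝ) ≤ Nat.card (ConjClasses U) := by exact_mod_cast Nat.card_pos
  have hnum : ((p : ℝ) - 1) * Nat.card (ConjClasses U) ≤
      ((p * Nat.card (ConjClasses U) : ℕ) : ℝ) - 1 := by
    push_cast; linarith
  have hmain := index_add_card_conjClasses_sub_one_div_le (centralizer ((P : Subgroup G) : Set G))
  rw [hkC] at hmain
  exact (add_le_add_right (div_le_div_of_nonneg_right hnum (Nat.cast_nonneg _)) _).trans hmain
end

section
/- For the Frattini quotient: if G is a finite group with Φ(G) its Frattini subgroup, and a prime p divides |G : F(G)|, then p divides |G/Φ(G) : F(G/Φ(G))|. -/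
/-- The Fitting subgroup of a group: the join of all nilpotent normal subgroups. -/
def fittingSubgroup (G : Type*) [Group G] : Subgroup G :=
  sSup {H : Subgroup G | H.Normal ∧ Group.IsNilpotent H}

/-!
Let `M ≤ Φ(G)` be normal and `K ⊇ M` a normal subgroup of `G` with `K/M` nilpotent. For a Sylow
subgroup `Q` of `K`, the image `QM/M` is a Sylow subgroup of the nilpotent normal subgroup `K/M`,
hence characteristic in it and normal in `G/M`; so `QM` is normal in `G`. The Frattini argument
gives `G = N_G(Q) QM = N_G(Q) M`, and as `M` consists of non-generators, `N_G(Q) = G`. Thus every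
Sylow subgroup of `K` is normal and `K` is nilpotent. Consequently the preimage of `F(G/M)` lies in
`F(G)`, so `|G : F(G)|` divides `|G/M : F(G/M)|`.
-/

open Subgroup

section

variable {G : Type*} [Group G]

lemma le_fittingSubgroup {H : Subgroup G} [hH : H.Normal] (h : Group.IsNilpotent H) :
    H ≤ fittingSubgroup G :=
  le_sSup ⟨hH, h⟩

lemma Sylow.normal_map_subtype_of_isNilpotent {p : ℕ} [Fact p.Prime] {K : Subgroup G} [K.Normal]
    [Finite K] [Group.IsNilpotent K] (P : Sylow p K) : (P.map K.subtype).Normal :=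
  haveI := P.characteristic_of_normal inferInstance
  inferInstance

/-- Frattini argument: `N_G(Q) M = G`, and `M ≤ Φ(G)` is non-generating. -/
lemma IsPGroup.normal_of_normal_sup_of_le_frattini [Finite G] {p : ℕ} [Fact p.Prime]
    {Q M : Subgroup G} (hM : M ≤ frattini G) (hQ : IsPGroup p Q)
    (hidx : ¬ p ∣ Q.relIndex (Q ⊔ M)) [(Q ⊔ M).Normal] : Q.Normal := by
  set N := Q ⊔ M
  have hQN : Q ≤ N := le_sup_left
  let S : Sylow p N := (hQ.of_equiv (subgroupOfEquivOfLe hQN).symm).toSylow hidx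
  have hSQ : (S : Subgroup N).map N.subtype = Q := by
    change (Q.subgroupOf N).map N.subtype = Q
    rw [subgroupOf_map_subtype, inf_of_le_left hQN]
  have hfrattini := Sylow.normalizer_sup_eq_top S
  rw [hSQ, ← sup_assoc, sup_of_le_left le_normalizer] at hfrattini
  have htop : normalizer (Q : Set G) ⊔ frattini G = ⊤ :=
    top_le_iff.mp (hfrattini ▸ sup_le_sup_left hM _)
  exact normalizer_eq_top_iff.mp (frattini_nongenerating htop)

lemma isNilpotent_of_isNilpotent_map_of_le_frattini [Finite G] {M K : Subgroup G} [M.Normal]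
    [hK : K.Normal] (hM : M ≤ frattini G) (hMK : M ≤ K)
    (hnil : Group.IsNilpotent (K.map (QuotientGroup.mk' M))) : Group.IsNilpotent K := by
  refine (Group.isNilpotent_of_finite_tfae (G := K)).out 0 3 |>.mpr fun p hp P ↦ ?_
  have := hp
  set π := QuotientGroup.mk' M
  set Q := P.map K.subtype
  have hQ_image :
      Q.map π = (P.mapSurjective (π.subgroupMap_surjective K)).map (K.map π).subtype := by
    rw [Sylow.coe_mapSurjective, map_map, map_map]
    rfl
  have : (K.map π).Normal := hK.map π (QuotientGroup.mk'_surjective M)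
  have : (Q ⊔ M).Normal := by
    rw [← QuotientGroup.ker_mk' M, ← comap_map_eq, hQ_image]
    exact (Sylow.normal_map_subtype_of_isNilpotent _).comap π
  have hidx : ¬ p ∣ Q.relIndex (Q ⊔ M) := by
    have hQK : Q.relIndex K = (P : Subgroup K).index := by
      rw [relIndex, subgroupOf, comap_map_eq_self_of_injective K.subtype_injective]
    refine fun hdvd ↦ P.not_dvd_index (hQK ▸ hdvd.trans ?_)
    exact Dvd.intro _ (relIndex_mul_relIndex _ _ _ le_sup_left (sup_le (map_subtype_le _) hMK))
  exact (IsPGroup.normal_of_normal_sup_of_le_frattini hM (P.isPGroup'.map _) hidx).of_map_subtype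

lemma comap_fittingSubgroup_quotient_le [Finite G] {M : Subgroup G} [M.Normal]
    (hM : M ≤ frattini G) :
    (fittingSubgroup (G ⧸ M)).comap (QuotientGroup.mk' M) ≤ fittingSubgroup G := by
  set π := QuotientGroup.mk' M
  have hπ : Function.Surjective π := QuotientGroup.mk'_surjective M
  have hMF : M ≤ fittingSubgroup G := by
    have := frattini_nilpotent (G := G)
    exact le_fittingSubgroup (Group.nilpotent_of_mulEquiv (subgroupOfEquivOfLe hM))
  have hF : fittingSubgroup (G ⧸ M) ≤ (fittingSubgroup G).map π := by
    refine sSup_le fun H ⟨hH, hnil⟩ ↦ ?_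
    have : (H.comap π).Normal := hH.comap π
    have hMH : M ≤ H.comap π := (QuotientGroup.ker_mk' M).ge.trans (ker_le_comap π H)
    rw [← map_comap_eq_self_of_surjective hπ H] at hnil ⊢
    exact map_mono (le_fittingSubgroup
      (isNilpotent_of_isNilpotent_map_of_le_frattini hM hMH hnil))
  calc (fittingSubgroup (G ⧸ M)).comap π
      ≤ ((fittingSubgroup G).map π).comap π := comap_mono hF
    _ = fittingSubgroup G := by rw [comap_map_eq, QuotientGroup.ker_mk', sup_of_le_left hMF]

lemma index_fittingSubgroup_dvd_index_fittingSubgroup_quotient [Finite G] {M : Subgroup G}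
    [M.Normal] (hM : M ≤ frattini G) :
    (fittingSubgroup G).index ∣ (fittingSubgroup (G ⧸ M)).index :=
  index_comap_of_surjective _ (QuotientGroup.mk'_surjective M) ▸
    index_dvd_of_le (comap_fittingSubgroup_quotient_le hM)

end

theorem stmt_19_general (G : Type*) [Group G] [Finite G] (p : ℕ)
    (hdvd : p ∣ (fittingSubgroup G).index) :
    p ∣ (fittingSubgroup (G ⧸ frattini G)).index :=
  hdvd.trans (index_fittingSubgroup_dvd_index_fittingSubgroup_quotient le_rfl)

/-- If `p` divides `|G : F(G)|` for a finite group `G`, then `p` divides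
`|G/Φ(G) : F(G/Φ(G))|`, where `Φ` is the Frattini subgroup. -/
theorem stmt_19 (G : Type*) [Group G] [Finite G] (p : ℕ) (hp : p.Prime)
    (hdvd : p ∣ (fittingSubgroup G).index) :
    p ∣ (fittingSubgroup (G ⧸ frattini G)).index :=
  stmt_19_general G p hdvd
end
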